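/- The single-qubit reduced density matrix of a Dicke state rank-one operator satisfies Tr_{2,…,k}(|D_k^α⟩⟨D_k^β|) = (1/k)·[[α δ_{αβ}, √(α(k-β)) δ_{α,β+1}],[√(β(k-α)) δ_{α,β-1}, (k-α) δ_{αβ}]] in the basis {|0⟩,|1⟩}. -/

import Mathlib

open scoped InnerProductSpace BigOperators ComplexConjugate

noncomputable section

/-- The Dicke state `|D_k^i⟩`: the normalized symmetric superposition of the
computational basis states of `k` qubits having exactly `i` zeros
(and `k - i` ones). -/
def Dicke (k i : ℕ) : EuclideanSpace ℂ (Fin k → Fin 2) :=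
  WithLp.toLp 2 fun x => if (Finset.univ.filter fun j => x j = 0).card = i
    then ((Real.sqrt (k.choose i) : ℂ))⁻¹ else 0

/-- The qubit basis state `|0⟩`. -/
def ket0 : EuclideanSpace ℂ (Fin 2) := WithLp.toLp 2 fun b => if b = 0 then 1 else 0

/-- The qubit basis state `|1⟩`. -/
def ket1 : EuclideanSpace ℂ (Fin 2) := WithLp.toLp 2 fun b => if b = 1 then 1 else 0

/-- The single-qubit reduced operator `Tr_{2,…,k}(|D_k^α⟩⟨D_k^β|)`, i.e. the partial
trace over all qubits but the first, written as a `2 × 2` matrix in the basis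
`{|0⟩, |1⟩}`. -/
def dickeReduced (m α β : ℕ) : Matrix (Fin 2) (Fin 2) ℂ :=
  Matrix.of fun s t : Fin 2 =>
    ∑ y : Fin m → Fin 2,
      Dicke (m + 1) α (Fin.cons s y) * conj (Dicke (m + 1) β (Fin.cons t y))

/- ### Auxiliary lemmas -/

lemma count_card' (m a : ℕ) :
    ((Finset.univ : Finset (Fin m → Fin 2)).filter
      fun y => (Finset.univ.filter fun j => y j = 0).card = a).card = m.choose a := by
  rw [show m.choose a = ((Finset.univ : Finset (Fin m)).powersetCard a).card by
    rw [Finset.card_powersetCard, Finset.card_univ, Fintype.card_fin]]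
  refine Finset.card_bij (fun y _ => Finset.univ.filter fun j => y j = 0) ?_ ?_ ?_
  · intro y hy
    simp only [Finset.mem_filter] at hy
    simp [Finset.mem_powersetCard, hy.2]
  · intro y₁ _ y₂ _ h
    funext j
    have := Finset.ext_iff.mp h j
    simp only [Finset.mem_filter, Finset.mem_univ, true_and] at this
    omega
  · intro S hS
    simp only [Finset.mem_powersetCard] at hS
    refine ⟨fun j => if j ∈ S then 0 else 1, ?_, ?_⟩
    · simp only [Finset.mem_filter, Finset.mem_univ, true_and]
      rw [show (Finset.univ.filter fun j => (if j ∈ S then (0:Fin 2) else 1) = 0) = S by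
        ext j; by_cases hj : j ∈ S <;> simp [hj]]
      exact hS.2
    · ext j; by_cases hj : j ∈ S <;> simp [hj]

lemma count_cons' (m : ℕ) (s : Fin 2) (y : Fin m → Fin 2) :
    (Finset.univ.filter fun j => (Fin.cons s y : Fin (m+1) → Fin 2) j = 0).card =
      (if s = 0 then 1 else 0) + (Finset.univ.filter fun j => y j = 0).card := by
  rw [Finset.card_filter, Fin.sum_univ_succ, Finset.card_filter]
  simp

lemma sum_ind' (m e f a b : ℕ) (c d : ℂ) :
    ∑ y : Fin m → Fin 2,
      (if e + (Finset.univ.filter fun j => y j = 0).card = a then c else 0) *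
      (if f + (Finset.univ.filter fun j => y j = 0).card = b then d else 0) =
    if e ≤ a ∧ f ≤ b ∧ a - e = b - f then (m.choose (a - e) : ℂ) * (c * d) else 0 := by
  split
  · next h =>
    obtain ⟨h1, h2, h3⟩ := h
    have key : ∀ y : Fin m → Fin 2,
        (if e + (Finset.univ.filter fun j => y j = 0).card = a then c else 0) *
        (if f + (Finset.univ.filter fun j => y j = 0).card = b then d else 0) =
        (if (Finset.univ.filter fun j => y j = 0).card = a - e then c * d else 0) := by
      intro y
      by_cases hy : (Finset.univ.filter fun j => y j = 0).card = a - e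
      · rw [if_pos hy, if_pos (by omega), if_pos (by omega)]
      · rw [if_neg hy, if_neg (by omega), zero_mul]
    rw [Finset.sum_congr rfl fun y _ => key y, ← Finset.sum_filter, Finset.sum_const,
      count_card', nsmul_eq_mul]
  · next h =>
    refine Finset.sum_eq_zero fun y _ => ?_
    split
    · next h1 =>
      rw [if_neg (fun h2 => h ⟨by omega, by omega, by omega⟩), mul_zero]
    · rw [zero_mul]

lemma key2' (m k : ℕ) : (m+1) * m.choose k = (k+1) * (m+1).choose (k+1) := by
  simpa [Nat.succ_eq_add_one, mul_comm] using Nat.add_one_mul_choose_eq m k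

lemma key1' (m k : ℕ) (h : k ≤ m + 1) :
    (m+1) * m.choose k = (m+1-k) * (m+1).choose k := by
  rcases Nat.lt_or_ge k (m+1) with hk | hk
  · have hk' : k ≤ m := by omega
    have h1 := Nat.add_one_mul_choose_eq m (m - k)
    rw [Nat.choose_symm hk'] at h1
    have h2 : m - k + 1 = m + 1 - k := by omega
    rw [h2] at h1
    have h3 : (m+1).choose (m+1-k) = (m+1).choose k := by
      rw [← Nat.choose_symm (by omega : k ≤ m+1)]
    rw [← h3, h1, mul_comm]
  · have hk' : k = m + 1 := by omega
    subst hk'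
    simp [Nat.choose_eq_zero_of_lt (by omega : m < m + 1)]

lemma r_diag' (m k : ℕ) (h : k ≤ m + 1) :
    (m.choose k : ℝ) * ((Real.sqrt ((m+1).choose k))⁻¹ * (Real.sqrt ((m+1).choose k))⁻¹) =
      ((m+1:ℝ) - k) / (m+1) := by
  have hC : 0 < (((m+1).choose k : ℝ)) := by
    exact_mod_cast Nat.choose_pos h
  have hr : ((m:ℝ)+1) * m.choose k = ((m+1:ℝ) - k) * ((m+1).choose k : ℝ) := by
    have hc : ((m+1:ℝ) - k) = ((m+1-k : ℕ) : ℝ) := by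
      push_cast [Nat.cast_sub h]; ring
    rw [hc]
    exact_mod_cast key1' m k h
  rw [← mul_inv, Real.mul_self_sqrt (by positivity),
    eq_div_iff (by positivity : ((m:ℝ)+1) ≠ 0)]
  field_simp
  linarith [hr]

lemma r_diag2' (m k : ℕ) (h1 : 1 ≤ k) (h2 : k ≤ m + 1) :
    (m.choose (k-1) : ℝ) * ((Real.sqrt ((m+1).choose k))⁻¹ * (Real.sqrt ((m+1).choose k))⁻¹) =
      (k:ℝ) / (m+1) := by
  have hC : 0 < (((m+1).choose k : ℝ)) := by
    exact_mod_cast Nat.choose_pos h2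
  have hnat : (m+1) * m.choose (k-1) = k * (m+1).choose k := by
    have := key2' m (k-1)
    have hk : k - 1 + 1 = k := by omega
    rwa [hk] at this
  have hr : ((m:ℝ)+1) * m.choose (k-1) = (k:ℝ) * ((m+1).choose k : ℝ) := by
    exact_mod_cast hnat
  rw [← mul_inv, Real.mul_self_sqrt (by positivity),
    eq_div_iff (by positivity : ((m:ℝ)+1) ≠ 0)]
  field_simp
  linarith [hr]

lemma r_off' (m b : ℕ) (h : b ≤ m) :
    (m.choose b : ℝ) * ((Real.sqrt ((m+1).choose (b+1)))⁻¹ * (Real.sqrt ((m+1).choose b))⁻¹) =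
      Real.sqrt ((b+1) * ((m+1:ℝ) - b)) / (m+1) := by
  have hA : 0 < (((m+1).choose (b+1) : ℝ)) := by
    exact_mod_cast Nat.choose_pos (by omega)
  have hB : 0 < (((m+1).choose b : ℝ)) := by
    exact_mod_cast Nat.choose_pos (by omega)
  have hm : (0:ℝ) < (m:ℝ) + 1 := by positivity
  have hble : (b:ℝ) ≤ (m:ℝ) := by exact_mod_cast h
  have hsub : (0:ℝ) ≤ (b+1:ℝ) * ((m+1:ℝ) - b) := by nlinarith
  have L : (m.choose b : ℝ) * ((Real.sqrt ((m+1).choose (b+1)))⁻¹ * (Real.sqrt ((m+1).choose b))⁻¹)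
      = Real.sqrt ((m.choose b : ℝ)^2 * ((((m+1).choose (b+1):ℝ))⁻¹ * (((m+1).choose b : ℝ))⁻¹)) := by
    rw [Real.sqrt_mul (by positivity), Real.sqrt_mul (by positivity),
      Real.sqrt_inv, Real.sqrt_inv, Real.sqrt_sq (by positivity)]
  have R : Real.sqrt ((b+1) * ((m+1:ℝ) - b)) / (m+1)
      = Real.sqrt (((b+1) * ((m+1:ℝ) - b)) * ((((m:ℝ)+1))^2)⁻¹) := by
    rw [Real.sqrt_mul hsub ((((m:ℝ)+1))^2)⁻¹, Real.sqrt_inv, Real.sqrt_sq hm.le,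
      div_eq_mul_inv]
  rw [L, R]
  congr 1
  have hnat : ((m+1) * m.choose b) * ((m+1) * m.choose b)
      = ((b+1) * (m+1).choose (b+1)) * ((m+1-b) * (m+1).choose b) := by
    rw [← key2' m b, ← key1' m b (by omega)]
  have hreal : (((m:ℝ)+1) * m.choose b) * (((m:ℝ)+1) * m.choose b)
      = ((b:ℝ)+1) * ((m+1).choose (b+1) : ℝ) * (((m+1:ℝ) - b) * ((m+1).choose b : ℝ)) := by
    have hc : ((m+1:ℝ) - b) = ((m+1-b : ℕ) : ℝ) := by
      push_cast [Nat.cast_sub (by omega : b ≤ m+1)]; ring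
    rw [hc]
    exact_mod_cast hnat
  field_simp
  nlinarith [hreal]

lemma dickeReduced_apply (m α β : ℕ) (s t : Fin 2) :
    dickeReduced m α β s t =
      if (if s = 0 then 1 else 0) ≤ α ∧ (if t = 0 then 1 else 0) ≤ β ∧
         α - (if s = 0 then 1 else 0) = β - (if t = 0 then 1 else 0)
      then (m.choose (α - (if s = 0 then 1 else 0)) : ℂ) *
           (((Real.sqrt ((m+1).choose α) : ℝ) : ℂ)⁻¹ * ((Real.sqrt ((m+1).choose β) : ℝ) : ℂ)⁻¹)
      else 0 := by
  show (∑ y : Fin m → Fin 2,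
      Dicke (m+1) α (Fin.cons s y) * conj (Dicke (m+1) β (Fin.cons t y))) = _
  simp only [Dicke, count_cons', apply_ite (starRingEnd ℂ), map_zero, map_inv₀,
    Complex.conj_ofReal]
  rw [sum_ind']

/-- `Tr_{2,…,k}(|D_k^α⟩⟨D_k^β|) = (1/k)·[[α δ_{αβ}, √(α(k-β)) δ_{α,β+1}],
[√(β(k-α)) δ_{α,β-1}, (k-α) δ_{αβ}]]` (here `k = m+1`). -/
theorem dickeReduced_eq (m α β : ℕ) (hα : α ≤ m + 1) (hβ : β ≤ m + 1) :
    dickeReduced m α β =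
      ((m + 1 : ℂ))⁻¹ •
        !![(α : ℂ) * (if α = β then 1 else 0),
            (Real.sqrt ((α : ℝ) * ((m + 1 : ℝ) - β)) : ℂ) * (if α = β + 1 then 1 else 0);
          (Real.sqrt ((β : ℝ) * ((m + 1 : ℝ) - α)) : ℂ) * (if α + 1 = β then 1 else 0),
            ((m + 1 : ℂ) - α) * (if α = β then 1 else 0)] := by
  ext i j
  fin_cases i <;> fin_cases j <;>
    simp only [Fin.mk_zero, Fin.mk_one, dickeReduced_apply, Matrix.smul_apply, Matrix.of_apply,
      Matrix.cons_val', Matrix.cons_val_zero, Matrix.cons_val_one, Matrix.head_cons,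
      Matrix.empty_val', Matrix.cons_val_fin_one, Matrix.head_fin_const, smul_eq_mul,
      Fin.isValue, reduceIte, one_ne_zero]
  · -- entry (0,0)
    by_cases hab : α = β
    · subst hab
      rw [if_pos rfl]
      rcases Nat.eq_zero_or_pos α with h0 | h0
      · subst h0; simp
      · rw [if_pos ⟨h0, h0, rfl⟩]
        have hc := congrArg Complex.ofReal (r_diag2' m α h0 hα)
        push_cast at hc
        rw [hc]
        ring
    · rw [if_neg (by omega), if_neg hab]
      ring
  · -- entry (0,1)
    by_cases hab : α = β + 1
    · subst hab
      rw [if_pos ⟨by omega, by omega, by omega⟩, if_pos rfl, Nat.add_sub_cancel]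
      have hc := congrArg Complex.ofReal (r_off' m β (by omega))
      push_cast at hc
      rw [hc]
      push_cast
      ring
    · rw [if_neg (by omega), if_neg hab]
      ring
  · -- entry (1,0)
    by_cases hab : α + 1 = β
    · subst hab
      rw [if_pos ⟨by omega, by omega, by omega⟩, if_pos rfl, Nat.sub_zero]
      have hc := congrArg Complex.ofReal (r_off' m α (by omega))
      push_cast at hc
      rw [mul_comm ((Real.sqrt ((m+1).choose α) : ℂ))⁻¹, hc]
      push_cast
      ring
    · rw [if_neg (by omega), if_neg hab]
      ring
  · -- entry (1,1)
    by_cases hab : α = β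
    · subst hab
      rw [if_pos ⟨Nat.zero_le _, Nat.zero_le _, rfl⟩, if_pos rfl, Nat.sub_zero]
      have hc := congrArg Complex.ofReal (r_diag' m α hα)
      push_cast at hc
      rw [hc]
      ring
    · rw [if_neg (by omega), if_neg hab]
      ring
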